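/- arXiv:1705.01163 — 4 statements merged into one kernel-verified Lean document; each statement's English description precedes it below -/
import Mathlib

section
/- Let A, A' be types with relation A_R : A → A' → Prop, and families of types B : A → Type, B' : A' → Type with parametricity relation B_R : ∀ a a', A_R a a' → B a → B' a' → Prop. Define pi_R f f' := ∀ a a' (r : A_R a a'), B_R a a' r (f a) (f' a'). If A_R is total and one-to-one, and B_R a a' r is total for all a, a', r, then pi_R is a total relation between (∀ a, B a) and (∀ a', B' a'). (The proof uses choice and proof irrelevance of A_R or treating A_R as proposition-valued.) -/
def TotalRel {A B : Sort*} (R : A → B → Prop) : Prop :=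
  (∀ a : A, ∃ b : B, R a b) ∧ (∀ b : B, ∃ a : A, R a b)

def OneToOne {A B : Sort*} (R : A → B → Prop) : Prop :=
  (∀ (a : A) (b1 b2 : B), R a b1 → R a b2 → b1 = b2) ∧
  (∀ (b : B) (a1 a2 : A), R a1 b → R a2 b → a1 = a2)

theorem stmt6 {A A' : Type} (A_R : A → A' → Prop)
    (B : A → Type) (B' : A' → Type)
    (B_R : ∀ a a', A_R a a' → B a → B' a' → Prop)
    (hAtot : TotalRel A_R) (hAone : OneToOne A_R)
    (hBtot : ∀ a a' (r : A_R a a'), TotalRel (B_R a a' r)) :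
    TotalRel (fun (f : ∀ a, B a) (f' : ∀ a', B' a') =>
      ∀ (a : A) (a' : A') (r : A_R a a'), B_R a a' r (f a) (f' a')) := by
  constructor
  · intro f
    choose g hg using hAtot.2
    choose f' hf' using fun a' => (hBtot (g a') a' (hg a')).1 (f (g a'))
    refine ⟨f', fun a a' r => ?_⟩
    have : g a' = a := hAone.2 a' (g a') a (hg a') r
    subst this
    exact hf' a'
  · intro f'
    choose g hg using hAtot.1
    choose f hf using fun a => (hBtot a (g a) (hg a)).2 (f' (g a))
    refine ⟨f, fun a a' r => ?_⟩
    have : g a = a' := hAone.1 a (g a) a' (hg a) r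
    subst this
    exact hf a
end

section
/- For indexed W-types: let I, A be types, B : A → Type, AI : A → I, BI : ∀ a, B a → I, and let IWT : I → Type be the indexed W-type inductively generated by: node : ∀ (a : A) (branches : ∀ b : B a, IWT (BI a b)), IWT (AI a). Given relations I_R : I → I' → Prop (one-to-one), A_R : A → A' → Prop (total), B_R fiberwise total, and compatible AI_R, BI_R (i.e., A_R a a' → I_R (AI a) (AI' a'), and A_R a a' → B_R a a' b b' → I_R (BI a b) (BI' a' b')), the canonical parametricity relation IWT_R between IWT i and IWT' i' (for I_R-related indices i, i') is total. -/
/-- The indexed W-type. -/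
inductive IWT (I A : Type) (B : A → Type) (AI : A → I) (BI : ∀ a, B a → I) : I → Type where
  | node (a : A) (branches : ∀ b : B a, IWT I A B AI BI (BI a b)) : IWT I A B AI BI (AI a)

/-- The canonical parametricity relation between two indexed W-types. -/
inductive IWT_R (I I' A A' : Type) (B : A → Type) (B' : A' → Type)
    (AI : A → I) (AI' : A' → I') (BI : ∀ a, B a → I) (BI' : ∀ a', B' a' → I')
    (I_R : I → I' → Prop) (A_R : A → A' → Prop)
    (B_R : ∀ a a', A_R a a' → B a → B' a' → Prop)
    (AI_R : ∀ a a', A_R a a' → I_R (AI a) (AI' a'))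
    (BI_R : ∀ a a' (aR : A_R a a') (b : B a) (b' : B' a'),
      B_R a a' aR b b' → I_R (BI a b) (BI' a' b')) :
    ∀ (i : I) (i' : I'), I_R i i' → IWT I A B AI BI i → IWT I' A' B' AI' BI' i' → Prop where
  | node (a : A) (a' : A') (aR : A_R a a')
      (branches : ∀ b : B a, IWT I A B AI BI (BI a b))
      (branches' : ∀ b' : B' a', IWT I' A' B' AI' BI' (BI' a' b'))
      (brR : ∀ (b : B a) (b' : B' a') (bR : B_R a a' aR b b'),
        IWT_R I I' A A' B B' AI AI' BI BI' I_R A_R B_R AI_R BI_R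
          (BI a b) (BI' a' b') (BI_R a a' aR b b' bR) (branches b) (branches' b')) :
      IWT_R I I' A A' B B' AI AI' BI BI' I_R A_R B_R AI_R BI_R
        (AI a) (AI' a') (AI_R a a' aR) (.node a branches) (.node a' branches')

theorem stmt14 (I I' A A' : Type) (B : A → Type) (B' : A' → Type)
    (AI : A → I) (AI' : A' → I') (BI : ∀ a, B a → I) (BI' : ∀ a', B' a' → I')
    (I_R : I → I' → Prop) (A_R : A → A' → Prop)
    (B_R : ∀ a a', A_R a a' → B a → B' a' → Prop)
    (AI_R : ∀ a a', A_R a a' → I_R (AI a) (AI' a'))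
    (BI_R : ∀ a a' (aR : A_R a a') (b : B a) (b' : B' a'),
      B_R a a' aR b b' → I_R (BI a b) (BI' a' b'))
    (hIone : OneToOne I_R)
    (hAtot : TotalRel A_R)
    (hBtot : ∀ a a' (aR : A_R a a'), TotalRel (B_R a a' aR))
    (hBone : ∀ a a' (aR : A_R a a'), OneToOne (B_R a a' aR)) :
    ∀ (i : I) (i' : I') (iR : I_R i i'),
      TotalRel (IWT_R I I' A A' B B' AI AI' BI BI' I_R A_R B_R AI_R BI_R i i' iR) := by
  have fwd : ∀ (i : I) (t : IWT I A B AI BI i) (i' : I') (iR : I_R i i'),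
      ∃ t', IWT_R I I' A A' B B' AI AI' BI BI' I_R A_R B_R AI_R BI_R i i' iR t t' := by
    intro i t
    induction t with
    | node a branches ih =>
      intro i' iR
      obtain ⟨a', aR⟩ := hAtot.1 a
      obtain rfl : i' = AI' a' := hIone.1 _ _ _ iR (AI_R a a' aR)
      have h : ∀ b' : B' a', ∃ t' : IWT I' A' B' AI' BI' (BI' a' b'),
          ∃ (b : B a) (bR : B_R a a' aR b b'),
            IWT_R I I' A A' B B' AI AI' BI BI' I_R A_R B_R AI_R BI_R
              (BI a b) (BI' a' b') (BI_R a a' aR b b' bR) (branches b) t' := by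
        intro b'
        obtain ⟨b, bR⟩ := (hBtot a a' aR).2 b'
        obtain ⟨t', ht'⟩ := ih b (BI' a' b') (BI_R a a' aR b b' bR)
        exact ⟨t', b, bR, ht'⟩
      choose branches' hb using h
      refine ⟨.node a' branches', ?_⟩
      refine IWT_R.node a a' aR branches branches' ?_
      intro b b' bR
      obtain ⟨b₀, bR₀, h₀⟩ := hb b'
      obtain rfl : b₀ = b := (hBone a a' aR).2 b' b₀ b bR₀ bR
      exact h₀
  have bwd : ∀ (i' : I') (t' : IWT I' A' B' AI' BI' i') (i : I) (iR : I_R i i'),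
      ∃ t, IWT_R I I' A A' B B' AI AI' BI BI' I_R A_R B_R AI_R BI_R i i' iR t t' := by
    intro i' t'
    induction t' with
    | node a' branches' ih =>
      intro i iR
      obtain ⟨a, aR⟩ := hAtot.2 a'
      obtain rfl : i = AI a := hIone.2 _ _ _ iR (AI_R a a' aR)
      have h : ∀ b : B a, ∃ t : IWT I A B AI BI (BI a b),
          ∃ (b' : B' a') (bR : B_R a a' aR b b'),
            IWT_R I I' A A' B B' AI AI' BI BI' I_R A_R B_R AI_R BI_R
              (BI a b) (BI' a' b') (BI_R a a' aR b b' bR) t (branches' b') := by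
        intro b
        obtain ⟨b', bR⟩ := (hBtot a a' aR).1 b
        obtain ⟨t, ht⟩ := ih b' (BI a b) (BI_R a a' aR b b' bR)
        exact ⟨t, b', bR, ht⟩
      choose branches hb using h
      refine ⟨.node a branches, ?_⟩
      refine IWT_R.node a a' aR branches branches' ?_
      intro b b' bR
      obtain ⟨b₀', bR₀, h₀⟩ := hb b
      obtain rfl : b₀' = b' := (hBone a a' aR).1 b b₀' b' bR₀ bR
      exact h₀
  intro i i' iR
  exact ⟨fun t => fwd i t i' iR, fun t' => bwd i' t' i iR⟩
end

section
/- For the indexed W-type IWT as above, if A_R is one-to-one and B_R is fiberwise total, then the canonical parametricity relation IWT_R between corresponding members of the two indexed W-type families is one-to-one: if a tree t is IWT_R-related (over the same index witnesses) to t1' and to t2', then t1' = t2'. (The proof uses function extensionality and generalizes the equality over indices via sigma types, then uses injectivity of dependent pairs at a fixed index.) -/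
section Aux

variable (I I' A A' : Type) (B : A → Type) (B' : A' → Type)
  (AI : A → I) (AI' : A' → I') (BI : ∀ a, B a → I) (BI' : ∀ a', B' a' → I')
  (I_R : I → I' → Prop) (A_R : A → A' → Prop)
  (B_R : ∀ a a', A_R a a' → B a → B' a' → Prop)
  (AI_R : ∀ a a', A_R a a' → I_R (AI a) (AI' a'))
  (BI_R : ∀ a a' (aR : A_R a a') (b : B a) (b' : B' a'),
    B_R a a' aR b b' → I_R (BI a b) (BI' a' b'))

local notation "RR" => IWT_R I I' A A' B B' AI AI' BI BI' I_R A_R B_R AI_R BI_R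

def IWT.root {i : I} : IWT I A B AI BI i → A
  | .node a _ => a

lemma inv1 {i i' iR t t'} (h : RR i i' iR t t') :
    ∀ (a : A) (br : ∀ b, IWT I A B AI BI (BI a b)),
      (⟨i, t⟩ : Σ j, IWT I A B AI BI j) = ⟨AI a, .node a br⟩ →
      ∃ (a' : A') (aR : A_R a a') (br' : ∀ b', IWT I' A' B' AI' BI' (BI' a' b')),
        (⟨i', t'⟩ : Σ j, IWT I' A' B' AI' BI' j) = ⟨AI' a', .node a' br'⟩ ∧
        ∀ b b' (bR : B_R a a' aR b b'),
          RR (BI a b) (BI' a' b') (BI_R a a' aR b b' bR) (br b) (br' b') := by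
  cases h with
  | node a0 a0' aR0 br0 br0' brR0 =>
    intro a br heq
    have ha : a0 = a :=
      congrArg (fun p : Σ j, IWT I A B AI BI j => IWT.root I A B AI BI p.2) heq
    subst ha
    injection heq with h1 h2
    have h3 := h2
    injection h3 with h4 h5
    have hb : br0 = br := h5
    subst hb
    exact ⟨a0', aR0, br0', rfl, brR0⟩

lemma inv2 {i i' iR t t'} (h : RR i i' iR t t') :
    ∀ (a' : A') (br' : ∀ b', IWT I' A' B' AI' BI' (BI' a' b')),
      (⟨i', t'⟩ : Σ j, IWT I' A' B' AI' BI' j) = ⟨AI' a', .node a' br'⟩ →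
      ∃ (a : A) (aR : A_R a a') (br : ∀ b, IWT I A B AI BI (BI a b)),
        (⟨i, t⟩ : Σ j, IWT I A B AI BI j) = ⟨AI a, .node a br⟩ ∧
        ∀ b b' (bR : B_R a a' aR b b'),
          RR (BI a b) (BI' a' b') (BI_R a a' aR b b' bR) (br b) (br' b') := by
  cases h with
  | node a0 a0' aR0 br0 br0' brR0 =>
    intro a' br' heq
    have ha : a0' = a' :=
      congrArg (fun p : Σ j, IWT I' A' B' AI' BI' j => IWT.root I' A' B' AI' BI' p.2) heq
    subst ha
    injection heq with h1 h2
    have h3 := h2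
    injection h3 with h4 h5
    have hb : br0' = br' := h5
    subst hb
    exact ⟨a0, aR0, br0, rfl, brR0⟩

lemma key1 (hAone : OneToOne A_R)
    (hBtot : ∀ a a' (aR : A_R a a'), TotalRel (B_R a a' aR))
    {i i' iR t t'} (h : RR i i' iR t t') :
    ∀ (i'' : I') (iR'' : I_R i i'') (t'' : IWT I' A' B' AI' BI' i''),
      RR i i'' iR'' t t'' →
      (⟨i', t'⟩ : Σ j, IWT I' A' B' AI' BI' j) = ⟨i'', t''⟩ := by
  induction h with
  | node a a' aR br br' brR ih =>
    intro i'' iR'' t'' h2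
    obtain ⟨a2', aR2, br2', heq2, brR2⟩ :=
      inv1 I I' A A' B B' AI AI' BI BI' I_R A_R B_R AI_R BI_R h2 a br rfl
    rw [heq2]
    have ha' : a' = a2' := hAone.1 a a' a2' aR aR2
    subst ha'
    have hbr : br' = br2' := by
      funext b'
      obtain ⟨b, bR⟩ := (hBtot a a' aR).2 b'
      have e := ih b b' bR (BI' a' b') (BI_R a a' aR b b' bR) (br2' b') (brR2 b b' bR)
      injection e with e1 e2
    rw [hbr]

lemma key2 (hAone : OneToOne A_R)
    (hBtot : ∀ a a' (aR : A_R a a'), TotalRel (B_R a a' aR))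
    {i i' iR t t'} (h : RR i i' iR t t') :
    ∀ (i0 : I) (iR0 : I_R i0 i') (t0 : IWT I A B AI BI i0),
      RR i0 i' iR0 t0 t' →
      (⟨i, t⟩ : Σ j, IWT I A B AI BI j) = ⟨i0, t0⟩ := by
  induction h with
  | node a a' aR br br' brR ih =>
    intro i0 iR0 t0 h2
    obtain ⟨a2, aR2, br2, heq2, brR2⟩ :=
      inv2 I I' A A' B B' AI AI' BI BI' I_R A_R B_R AI_R BI_R h2 a' br' rfl
    rw [heq2]
    have ha : a = a2 := hAone.2 a' a a2 aR aR2
    subst ha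
    have hbr : br = br2 := by
      funext b
      obtain ⟨b', bR⟩ := (hBtot a a' aR).1 b
      have e := ih b b' bR (BI a b) (BI_R a a' aR b b' bR) (br2 b) (brR2 b b' bR)
      injection e with e1 e2
    rw [hbr]

end Aux

theorem stmt15 (I I' A A' : Type) (B : A → Type) (B' : A' → Type)
    (AI : A → I) (AI' : A' → I') (BI : ∀ a, B a → I) (BI' : ∀ a', B' a' → I')
    (I_R : I → I' → Prop) (A_R : A → A' → Prop)
    (B_R : ∀ a a', A_R a a' → B a → B' a' → Prop)
    (AI_R : ∀ a a', A_R a a' → I_R (AI a) (AI' a'))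
    (BI_R : ∀ a a' (aR : A_R a a') (b : B a) (b' : B' a'),
      B_R a a' aR b b' → I_R (BI a b) (BI' a' b'))
    (hAone : OneToOne A_R)
    (hBtot : ∀ a a' (aR : A_R a a'), TotalRel (B_R a a' aR)) :
    ∀ (i : I) (i' : I') (iR : I_R i i'),
      OneToOne (IWT_R I I' A A' B B' AI AI' BI BI' I_R A_R B_R AI_R BI_R i i' iR) := by
  intro i i' iR
  constructor
  · intro t t1' t2' h1 h2
    have e := key1 I I' A A' B B' AI AI' BI BI' I_R A_R B_R AI_R BI_R hAone hBtot h1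
      i' iR t2' h2
    injection e with e1 e2
  · intro t' t1 t2 h1 h2
    have e := key2 I I' A A' B B' AI AI' BI BI' I_R A_R B_R AI_R BI_R hAone hBtot h1
      i iR t2 h2
    injection e with e1 e2
end

section
/- For the Prop-valued indexed W-type IWP (same shape as IWT but landing in Prop), assume A_R is total, B_R is fiberwise total, and I_R is one-to-one. Then for any proof p : IWP i and any i'-index related to i by i_R, the proposition IWP' i' holds, and moreover every proof of IWP' i' is IWP_R-related to p. Consequently, IWP_R between IWP i and IWP' i' satisfies IffProps (IWP i ↔ IWP' i') and CompleteRel (every pair of proofs is related). (Proof by induction on p, using proof irrelevance.) -/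
def IffProps {P Q : Prop} (_R : P → Q → Prop) : Prop := P ↔ Q

def CompleteRel {P Q : Prop} (R : P → Q → Prop) : Prop := ∀ (p : P) (q : Q), R p q

/-- The Prop-valued indexed W-type. -/
inductive IWP (I A : Type) (B : A → Type) (AI : A → I) (BI : ∀ a, B a → I) : I → Prop where
  | pnode (a : A) (branches : ∀ b : B a, IWP I A B AI BI (BI a b)) : IWP I A B AI BI (AI a)

/-- The inductive-style parametricity relation between two Prop-valued indexed W-types. -/
inductive IWP_R (I I' A A' : Type) (B : A → Type) (B' : A' → Type)
    (AI : A → I) (AI' : A' → I') (BI : ∀ a, B a → I) (BI' : ∀ a', B' a' → I')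
    (I_R : I → I' → Prop) (A_R : A → A' → Prop)
    (B_R : ∀ a a', A_R a a' → B a → B' a' → Prop)
    (AI_R : ∀ a a', A_R a a' → I_R (AI a) (AI' a'))
    (BI_R : ∀ a a' (aR : A_R a a') (b : B a) (b' : B' a'),
      B_R a a' aR b b' → I_R (BI a b) (BI' a' b')) :
    ∀ (i : I) (i' : I'), I_R i i' → IWP I A B AI BI i → IWP I' A' B' AI' BI' i' → Prop where
  | pnode (a : A) (a' : A') (aR : A_R a a')
      (branches : ∀ b : B a, IWP I A B AI BI (BI a b))
      (branches' : ∀ b' : B' a', IWP I' A' B' AI' BI' (BI' a' b'))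
      (brR : ∀ (b : B a) (b' : B' a') (bR : B_R a a' aR b b'),
        IWP_R I I' A A' B B' AI AI' BI BI' I_R A_R B_R AI_R BI_R
          (BI a b) (BI' a' b') (BI_R a a' aR b b' bR) (branches b) (branches' b')) :
      IWP_R I I' A A' B B' AI AI' BI BI' I_R A_R B_R AI_R BI_R
        (AI a) (AI' a') (AI_R a a' aR) (.pnode a branches) (.pnode a' branches')

lemma stmt16_aux (I I' A A' : Type) (B : A → Type) (B' : A' → Type)
    (AI : A → I) (AI' : A' → I') (BI : ∀ a, B a → I) (BI' : ∀ a', B' a' → I')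
    (I_R : I → I' → Prop) (A_R : A → A' → Prop)
    (B_R : ∀ a a', A_R a a' → B a → B' a' → Prop)
    (AI_R : ∀ a a', A_R a a' → I_R (AI a) (AI' a'))
    (BI_R : ∀ a a' (aR : A_R a a') (b : B a) (b' : B' a'),
      B_R a a' aR b b' → I_R (BI a b) (BI' a' b'))
    (hAtot : ∀ a : A, ∃ a', A_R a a')
    (hBtot : ∀ a a' (aR : A_R a a') (b' : B' a'), ∃ b, B_R a a' aR b b')
    (hIone : ∀ (a : I) (b1 b2 : I'), I_R a b1 → I_R a b2 → b1 = b2) :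
    ∀ (i : I) (p : IWP I A B AI BI i) (i' : I') (iR : I_R i i'),
      IWP I' A' B' AI' BI' i' ∧
      ∀ q : IWP I' A' B' AI' BI' i',
        IWP_R I I' A A' B B' AI AI' BI BI' I_R A_R B_R AI_R BI_R i i' iR p q := by
  intro i p
  induction p with
  | pnode a branches ih =>
    intro i' iR
    obtain ⟨a', aR⟩ := hAtot a
    have e : i' = AI' a' := hIone _ _ _ iR (AI_R a a' aR)
    subst e
    have hiR : iR = AI_R a a' aR := rfl
    subst hiR
    have branches' : ∀ b' : B' a', IWP I' A' B' AI' BI' (BI' a' b') := fun b' =>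
      (ih (hBtot a a' aR b').choose (BI' a' b')
        (BI_R a a' aR _ b' (hBtot a a' aR b').choose_spec)).1
    refine ⟨IWP.pnode a' branches', fun q => ?_⟩
    have hq : q = IWP.pnode a' branches' := rfl
    subst hq
    exact IWP_R.pnode a a' aR branches branches' fun b b' bR =>
      (ih b (BI' a' b') (BI_R a a' aR b b' bR)).2 (branches' b')

theorem stmt16 (I I' A A' : Type) (B : A → Type) (B' : A' → Type)
    (AI : A → I) (AI' : A' → I') (BI : ∀ a, B a → I) (BI' : ∀ a', B' a' → I')
    (I_R : I → I' → Prop) (A_R : A → A' → Prop)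
    (B_R : ∀ a a', A_R a a' → B a → B' a' → Prop)
    (AI_R : ∀ a a', A_R a a' → I_R (AI a) (AI' a'))
    (BI_R : ∀ a a' (aR : A_R a a') (b : B a) (b' : B' a'),
      B_R a a' aR b b' → I_R (BI a b) (BI' a' b'))
    (hAtot : TotalRel A_R)
    (hBtot : ∀ a a' (aR : A_R a a'), TotalRel (B_R a a' aR))
    (hIone : OneToOne I_R) :
    ∀ (i : I) (i' : I') (iR : I_R i i'),
      (∀ p : IWP I A B AI BI i,
        IWP I' A' B' AI' BI' i' ∧
        ∀ q : IWP I' A' B' AI' BI' i',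
          IWP_R I I' A A' B B' AI AI' BI BI' I_R A_R B_R AI_R BI_R i i' iR p q) ∧
      IffProps (IWP_R I I' A A' B B' AI AI' BI BI' I_R A_R B_R AI_R BI_R i i' iR) ∧
      CompleteRel (IWP_R I I' A A' B B' AI AI' BI BI' I_R A_R B_R AI_R BI_R i i' iR) := by
  intro i i' iR
  have fwd := fun p => stmt16_aux I I' A A' B B' AI AI' BI BI' I_R A_R B_R AI_R BI_R
    hAtot.1 (fun a a' aR => (hBtot a a' aR).2) hIone.1 i p i' iR
  have bwd : IWP I' A' B' AI' BI' i' → IWP I A B AI BI i := fun q =>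
    (stmt16_aux I' I A' A B' B AI' AI BI' BI (fun i' i => I_R i i') (fun a' a => A_R a a')
      (fun a' a aR b' b => B_R a a' aR b b') (fun a' a aR => AI_R a a' aR)
      (fun a' a aR b' b bR => BI_R a a' aR b b' bR)
      hAtot.2 (fun a' a aR => (hBtot a a' aR).1) hIone.2 i' q i iR).1
  exact ⟨fun p => ⟨(fwd p).1, fun q => (fwd p).2 q⟩,
    ⟨fun p => (fwd p).1, bwd⟩,
    fun p q => (fwd p).2 q⟩
end
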